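/- Let λ > 0 and let x_f be a nonzero real fixed point of ζ_λ (so x_f ≠ 0, x_f ≠ −1, and ζ_λ(x_f) = x_f). Then x_f > −1 and the multiplier of the fixed point satisfies |ζ_λ'(x_f)| = |x_f² + x_f − 1|/(x_f + 1). -/

import Mathlib

/-- The real function `ζ_λ(x) = λ·x·e^{−x}/(x+1)`. -/
noncomputable def zeta (lam x : ℝ) : ℝ := lam * x * Real.exp (-x) / (x + 1)

/-
At a fixed point `x ≠ 0` the fixed-point equation reads `λ e^{-x} = x + 1`; in particular
`x + 1 > 0`. The quotient rule gives `ζ_λ'(x) = λ e^{-x} (1 - x - x²) / (x + 1)²`, and substituting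
`λ e^{-x} = x + 1` leaves `(1 - x - x²) / (x + 1)`.
-/

theorem zeta_eq_self_iff {lam x : ℝ} (hx0 : x ≠ 0) (hx1 : x + 1 ≠ 0) :
    zeta lam x = x ↔ lam * Real.exp (-x) = x + 1 := by
  rw [zeta, div_eq_iff hx1]
  constructor
  · intro h
    exact mul_left_cancel₀ hx0 (by linear_combination h)
  · intro h
    linear_combination x * h

theorem hasDerivAt_zeta (lam : ℝ) {x : ℝ} (hx1 : x + 1 ≠ 0) :
    HasDerivAt (zeta lam) (lam * Real.exp (-x) * (1 - x - x ^ 2) / (x + 1) ^ 2) x := by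
  have hnum : HasDerivAt (fun y => lam * y * Real.exp (-y)) (lam * Real.exp (-x) * (1 - x)) x :=
    (((hasDerivAt_id' x).const_mul lam).mul (hasDerivAt_neg x).exp).congr_deriv (by ring)
  exact (hnum.div ((hasDerivAt_id' x).add_const 1) hx1).congr_deriv (by ring)

theorem deriv_zeta_of_eq_self {lam x : ℝ} (hx1 : x + 1 ≠ 0) (hfix : lam * Real.exp (-x) = x + 1) :
    deriv (zeta lam) x = (1 - x - x ^ 2) / (x + 1) := by
  rw [(hasDerivAt_zeta lam hx1).deriv, hfix]
  field_simp

theorem multiplier_at_nonzero_fixed_point (lam : ℝ) (hlam : 0 < lam) (xf : ℝ)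
    (hxf0 : xf ≠ 0) (hxf1 : xf ≠ -1) (hfix : zeta lam xf = xf) :
    -1 < xf ∧ |deriv (zeta lam) xf| = |xf ^ 2 + xf - 1| / (xf + 1) := by
  have hden : xf + 1 ≠ 0 := by contrapose! hxf1; linarith
  have hexp := (zeta_eq_self_iff hxf0 hden).mp hfix
  have hpos : 0 < xf + 1 := hexp ▸ by positivity
  refine ⟨by linarith, ?_⟩
  rw [deriv_zeta_of_eq_self hden hexp, abs_div, abs_of_pos hpos, ← abs_neg]
  congr 2
  ring
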